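/- Let f(t,s,r)=γ(t)+sX(t)+rY(t) be a non-degenerate two-ruled hypersurface in ℝ⁴ with constrictively adapted director curves. For ε∈ℝ define d(ε,s₁,r₁,s₂,r₂)=|γ(0)+s₁X(0)+r₁Y(0)−γ(ε)−s₂X(ε)−r₂Y(ε)|²/2. Then for every sufficiently small ε≠0 the function (s₁,r₁,s₂,r₂)↦d has a unique critical point (s₁(ε),r₁(ε),s₂(ε),r₂(ε)), which converges as ε→0 to (s₀,r₀,s₀,r₀), where (s₀,r₀) is the unique solution of the linear system ⟨X'(0),X'(0)⟩s+⟨X'(0),Y'(0)⟩r=−⟨γ'(0),X'(0)⟩, ⟨X'(0),Y'(0)⟩s+⟨Y'(0),Y'(0)⟩r=−⟨γ'(0),Y'(0)⟩; that is, the striction curve point is the limit of the pairs of points minimizing the distance between adjacent rulings. -/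

import Mathlib

open scoped Topology
open Filter

noncomputable section

/-- Ambient space `ℝ⁴`. -/
abbrev E4 := Fin 4 → ℝ

/-- The standard inner product on `ℝ⁴`. -/
def dot4 (u v : E4) : ℝ := ∑ i, u i * v i

namespace Stmt4Aux

lemma dot4_comm (u v : E4) : dot4 u v = dot4 v u := by
  unfold dot4; exact Finset.sum_congr rfl fun i _ => mul_comm _ _

lemma dot4_smul_right (c : ℝ) (u v : E4) : dot4 u (c • v) = c * dot4 u v := by
  simp only [dot4, Pi.smul_apply, smul_eq_mul, Finset.mul_sum]
  exact Finset.sum_congr rfl fun i _ => by ring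

lemma dot4_sub_right (u v w : E4) : dot4 u (v - w) = dot4 u v - dot4 u w := by
  simp only [dot4, Pi.sub_apply, ← Finset.sum_sub_distrib]
  exact Finset.sum_congr rfl fun i _ => by ring

lemma dot4_self_eq_zero {v : E4} (h : dot4 v v = 0) : v = 0 := by
  funext i
  have hnn : ∀ j ∈ Finset.univ, 0 ≤ v j * v j := fun j _ => mul_self_nonneg _
  have := (Finset.sum_eq_zero_iff_of_nonneg hnn).1 h i (Finset.mem_univ i)
  have := mul_self_eq_zero.1 this
  simpa using this

lemma dot4_expand (a c : ℝ) (u v : E4) :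
    dot4 (a • u - c • v) (a • u - c • v)
      = a * a * dot4 u u - 2 * (a * c) * dot4 u v + c * c * dot4 v v := by
  simp only [dot4, Finset.mul_sum, ← Finset.sum_sub_distrib, ← Finset.sum_add_distrib]
  exact Finset.sum_congr rfl fun i _ => by
    simp only [Pi.sub_apply, Pi.smul_apply, smul_eq_mul]; ring

abbrev Q4 := (ℝ × ℝ) × ℝ × ℝ

def P11 : Q4 →L[ℝ] ℝ := (ContinuousLinearMap.fst ℝ ℝ ℝ).comp (ContinuousLinearMap.fst ℝ (ℝ×ℝ) (ℝ×ℝ))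
def P12 : Q4 →L[ℝ] ℝ := (ContinuousLinearMap.snd ℝ ℝ ℝ).comp (ContinuousLinearMap.fst ℝ (ℝ×ℝ) (ℝ×ℝ))
def P21 : Q4 →L[ℝ] ℝ := (ContinuousLinearMap.fst ℝ ℝ ℝ).comp (ContinuousLinearMap.snd ℝ (ℝ×ℝ) (ℝ×ℝ))
def P22 : Q4 →L[ℝ] ℝ := (ContinuousLinearMap.snd ℝ ℝ ℝ).comp (ContinuousLinearMap.snd ℝ (ℝ×ℝ) (ℝ×ℝ))

@[simp] lemma P11_apply (q : Q4) : P11 q = q.1.1 := rfl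
@[simp] lemma P12_apply (q : Q4) : P12 q = q.1.2 := rfl
@[simp] lemma P21_apply (q : Q4) : P21 q = q.2.1 := rfl
@[simp] lemma P22_apply (q : Q4) : P22 q = q.2.2 := rfl

/-- gradient of the squared distance function -/
lemma hasFDerivAt_quad (c₁ c₂ x y z w : E4) (q : Q4) :
    HasFDerivAt
      (fun q : Q4 => dot4 (c₁ + q.1.1 • x + q.1.2 • y - c₂ - q.2.1 • z - q.2.2 • w)
        (c₁ + q.1.1 • x + q.1.2 • y - c₂ - q.2.1 • z - q.2.2 • w) / 2)
      (dot4 (c₁ + q.1.1 • x + q.1.2 • y - c₂ - q.2.1 • z - q.2.2 • w) x • P11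
        + dot4 (c₁ + q.1.1 • x + q.1.2 • y - c₂ - q.2.1 • z - q.2.2 • w) y • P12
        - dot4 (c₁ + q.1.1 • x + q.1.2 • y - c₂ - q.2.1 • z - q.2.2 • w) z • P21
        - dot4 (c₁ + q.1.1 • x + q.1.2 • y - c₂ - q.2.1 • z - q.2.2 • w) w • P22) q := by
  set V : Q4 → E4 := fun q => c₁ + q.1.1 • x + q.1.2 • y - c₂ - q.2.1 • z - q.2.2 • w with hV
  have h11 : HasFDerivAt (fun q : Q4 => q.1.1) P11 q := P11.hasFDerivAt
  have h12 : HasFDerivAt (fun q : Q4 => q.1.2) P12 q := P12.hasFDerivAt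
  have h21 : HasFDerivAt (fun q : Q4 => q.2.1) P21 q := P21.hasFDerivAt
  have h22 : HasFDerivAt (fun q : Q4 => q.2.2) P22 q := P22.hasFDerivAt
  have hA : ∀ i : Fin 4, HasFDerivAt (fun q : Q4 => V q i)
      (x i • P11 + y i • P12 - z i • P21 - w i • P22) q := by
    intro i
    exact ((((h11.mul_const (x i)).const_add (c₁ i)).add (h12.mul_const (y i))).sub_const
      (c₂ i) |>.sub (h21.mul_const (z i))).sub (h22.mul_const (w i))
  set L : Fin 4 → Q4 →L[ℝ] ℝ := fun i => x i • P11 + y i • P12 - z i • P21 - w i • P22 with hL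
  have hsum : HasFDerivAt (fun q : Q4 => ∑ i : Fin 4, V q i * V q i)
      (∑ i : Fin 4, (V q i • L i + V q i • L i)) q :=
    HasFDerivAt.fun_sum fun i _ => (hA i).mul (hA i)
  have h2 : HasFDerivAt (fun q : Q4 => (∑ i : Fin 4, V q i * V q i) * 2⁻¹)
      ((2:ℝ)⁻¹ • ∑ i : Fin 4, (V q i • L i + V q i • L i)) q := by
    simpa [smul_comm] using hsum.mul_const (2:ℝ)⁻¹
  have hfun : (fun q : Q4 => dot4 (V q) (V q) / 2)
      = fun q : Q4 => (∑ i : Fin 4, V q i * V q i) * 2⁻¹ := by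
    funext p; rw [div_eq_mul_inv]; rfl
  have hder : ((2:ℝ)⁻¹ • ∑ i : Fin 4, (V q i • L i + V q i • L i))
      = dot4 (V q) x • P11 + dot4 (V q) y • P12 - dot4 (V q) z • P21 - dot4 (V q) w • P22 := by
    refine ContinuousLinearMap.ext fun v => ?_
    simp only [ContinuousLinearMap.smul_apply, ContinuousLinearMap.coe_sum',
      Finset.sum_apply, ContinuousLinearMap.add_apply, ContinuousLinearMap.coe_smul',
      Pi.smul_apply, smul_eq_mul, ContinuousLinearMap.coe_sub', Pi.sub_apply,
      P11_apply, P12_apply, P21_apply, P22_apply, hL, dot4, Fin.sum_univ_four]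
    ring
  rw [hfun]
  rw [← hder]
  exact h2

lemma comb_eq_zero_iff (a b c e : ℝ) :
    a • P11 + b • P12 - c • P21 - e • P22 = 0 ↔ a = 0 ∧ b = 0 ∧ c = 0 ∧ e = 0 := by
  constructor
  · intro h
    refine ⟨?_, ?_, ?_, ?_⟩
    · simpa using congrArg (fun L : Q4 →L[ℝ] ℝ => L (((1:ℝ),(0:ℝ)),((0:ℝ),(0:ℝ)))) h
    · simpa using congrArg (fun L : Q4 →L[ℝ] ℝ => L (((0:ℝ),(1:ℝ)),((0:ℝ),(0:ℝ)))) h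
    · simpa using congrArg (fun L : Q4 →L[ℝ] ℝ => L (((0:ℝ),(0:ℝ)),((1:ℝ),(0:ℝ)))) h
    · simpa using congrArg (fun L : Q4 →L[ℝ] ℝ => L (((0:ℝ),(0:ℝ)),((0:ℝ),(1:ℝ)))) h
  · rintro ⟨rfl, rfl, rfl, rfl⟩; simp

lemma mulVec_eq_iff {n : Type*} [Fintype n] [DecidableEq n] (M : Matrix n n ℝ)
    (hdet : M.det ≠ 0) (b u : n → ℝ) :
    M.mulVec u = b ↔ u = M.det⁻¹ • M.adjugate.mulVec b := by
  constructor
  · intro h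
    have h2 : M.adjugate.mulVec (M.mulVec u) = M.det • u := by
      rw [Matrix.mulVec_mulVec, Matrix.adjugate_mul, Matrix.smul_mulVec,
        Matrix.one_mulVec]
    rw [h] at h2
    rw [h2, smul_smul, inv_mul_cancel₀ hdet, one_smul]
  · rintro rfl
    rw [Matrix.mulVec_smul, Matrix.mulVec_mulVec, Matrix.mul_adjugate,
      Matrix.smul_mulVec, Matrix.one_mulVec, smul_smul, inv_mul_cancel₀ hdet, one_smul]

/-- difference quotient, patched at `0` with the derivative -/
def Dq (f : ℝ → E4) : ℝ → E4 := fun ε => if ε = 0 then deriv f 0 else ε⁻¹ • (f ε - f 0)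

lemma Dq_zero (f : ℝ → E4) : Dq f 0 = deriv f 0 := by simp [Dq]

lemma Dq_tendsto {f : ℝ → E4} (hf : DifferentiableAt ℝ f 0) :
    Tendsto (Dq f) (𝓝 (0:ℝ)) (𝓝 (deriv f 0)) := by
  rw [← nhdsNE_sup_pure (0:ℝ), tendsto_sup]
  constructor
  · have hslope : Tendsto (slope f 0) (𝓝[≠] (0:ℝ)) (𝓝 (deriv f 0)) :=
      hasDerivAt_iff_tendsto_slope.1 hf.hasDerivAt
    refine hslope.congr' ?_
    filter_upwards [self_mem_nhdsWithin] with ε (hε : ε ≠ 0)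
    simp [Dq, hε, slope_def_module]
  · simpa [Dq] using tendsto_pure_nhds (Dq f) 0 |>.congr fun _ => rfl

lemma hasDerivAt_dot4 {f g : ℝ → E4} {f' g' : E4} {t : ℝ}
    (hf : HasDerivAt f f' t) (hg : HasDerivAt g g' t) :
    HasDerivAt (fun t => dot4 (f t) (g t)) (dot4 f' (g t) + dot4 (f t) g') t := by
  have hfi := hasDerivAt_pi.1 hf
  have hgi := hasDerivAt_pi.1 hg
  have h : HasDerivAt (fun t => ∑ i : Fin 4, f t i * g t i)
      (∑ i : Fin 4, (f' i * g t i + f t i * g' i)) t :=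
    HasDerivAt.fun_sum fun i _ => (hfi i).mul (hgi i)
  have : (∑ i : Fin 4, (f' i * g t i + f t i * g' i)) = dot4 f' (g t) + dot4 (f t) g' := by
    rw [Finset.sum_add_distrib]; rfl
  rw [this] at h
  exact h

/-- the four test vectors at parameter `ε` -/
def Tv (X Y : ℝ → E4) (ε : ℝ) : Fin 4 → E4 := ![X 0, Y 0, Dq X ε, Dq Y ε]

def sg : Fin 4 → ℝ := ![1, 1, -1, -1]

/-- the coefficient matrix of the rescaled critical point system -/
def Mm (X Y : ℝ → E4) (ε : ℝ) : Matrix (Fin 4) (Fin 4) ℝ :=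
  Matrix.of fun j k => sg k * dot4 (Tv X Y ε k) (Tv X Y ε j)

/-- the right hand side of the rescaled critical point system -/
def bv (γ X Y : ℝ → E4) (ε : ℝ) : Fin 4 → ℝ := fun j => dot4 (Dq γ ε) (Tv X Y ε j)

/-- the solution of the rescaled critical point system -/
def solv (γ X Y : ℝ → E4) (ε : ℝ) : Fin 4 → ℝ :=
  (Mm X Y ε).det⁻¹ • (Mm X Y ε).adjugate.mulVec (bv γ X Y ε)

/-- the critical point -/
def scf (γ X Y : ℝ → E4) (ε : ℝ) : Q4 :=
  ((solv γ X Y ε 2 + ε * solv γ X Y ε 0, solv γ X Y ε 3 + ε * solv γ X Y ε 1),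
    (solv γ X Y ε 2, solv γ X Y ε 3))

end Stmt4Aux

set_option maxHeartbeats 2000000 in
open Stmt4Aux in
/-- For a non-degenerate two-ruled hypersurface `f(t,s,r) = γ(t)+sX(t)+rY(t)` in `ℝ⁴` with
constrictively adapted director curves, the squared-distance function
`d(ε,s₁,r₁,s₂,r₂)` between the rulings at times `0` and `ε` has, for sufficiently small
`ε ≠ 0`, a unique critical point, which converges as `ε → 0` to `((s₀,r₀),(s₀,r₀))`
where `(s₀,r₀)` is the unique solution of the linear system
`⟨X',X'⟩s+⟨X',Y'⟩r=−⟨γ',X'⟩`, `⟨X',Y'⟩s+⟨Y',Y'⟩r=−⟨γ',Y'⟩` at `t = 0`. -/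
theorem stmt4 (γ X Y : ℝ → E4)
    (hγ : ContDiff ℝ (⊤ : ℕ∞) γ) (hX : ContDiff ℝ (⊤ : ℕ∞) X) (hY : ContDiff ℝ (⊤ : ℕ∞) Y)
    -- constrictively adapted director curves
    (hXunit : ∀ᶠ t in 𝓝 (0:ℝ), dot4 (X t) (X t) = 1)
    (hYunit : ∀ᶠ t in 𝓝 (0:ℝ), dot4 (Y t) (Y t) = 1)
    (hXY : ∀ᶠ t in 𝓝 (0:ℝ), dot4 (X t) (Y t) = 0)
    (hXY' : ∀ᶠ t in 𝓝 (0:ℝ), dot4 (X t) (deriv Y t) = 0)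
    -- non-degeneracy
    (hnd : ∀ᶠ t in 𝓝 (0:ℝ),
      LinearIndependent ℝ ![X t, Y t, deriv X t, deriv Y t])
    (d : ℝ → (ℝ × ℝ) × ℝ × ℝ → ℝ)
    (hd : d = fun ε q =>
      dot4 (γ 0 + q.1.1 • X 0 + q.1.2 • Y 0 - γ ε - q.2.1 • X ε - q.2.2 • Y ε)
           (γ 0 + q.1.1 • X 0 + q.1.2 • Y 0 - γ ε - q.2.1 • X ε - q.2.2 • Y ε) / 2)
    (System : ℝ × ℝ → Prop)
    (hSystem : System = fun p =>
      dot4 (deriv X 0) (deriv X 0) * p.1 + dot4 (deriv X 0) (deriv Y 0) * p.2 =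
        -(dot4 (deriv γ 0) (deriv X 0)) ∧
      dot4 (deriv X 0) (deriv Y 0) * p.1 + dot4 (deriv Y 0) (deriv Y 0) * p.2 =
        -(dot4 (deriv γ 0) (deriv Y 0))) :
    (∃! p : ℝ × ℝ, System p) ∧
    ∃ sc : ℝ → (ℝ × ℝ) × ℝ × ℝ,
      (∀ᶠ ε in 𝓝[≠] (0:ℝ), ∀ q : (ℝ × ℝ) × ℝ × ℝ,
        fderiv ℝ (d ε) q = 0 ↔ q = sc ε) ∧
      ∀ s₀ r₀ : ℝ, System (s₀, r₀) →
        Filter.Tendsto sc (𝓝[≠] (0:ℝ)) (𝓝 ((s₀, r₀), (s₀, r₀))) := by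
  subst hd hSystem
  have hX0 : DifferentiableAt ℝ X 0 := (hX.differentiable (by simp)).differentiableAt
  have hY0 : DifferentiableAt ℝ Y 0 := (hY.differentiable (by simp)).differentiableAt
  have hγ0 : DifferentiableAt ℝ γ 0 := (hγ.differentiable (by simp)).differentiableAt
  -- orthogonality relations at 0
  have oXX : dot4 (X 0) (X 0) = 1 := hXunit.self_of_nhds
  have oYY : dot4 (Y 0) (Y 0) = 1 := hYunit.self_of_nhds
  have oXY : dot4 (X 0) (Y 0) = 0 := hXY.self_of_nhds
  have oYX : dot4 (Y 0) (X 0) = 0 := (dot4_comm _ _).trans oXY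
  have oXYd : dot4 (X 0) (deriv Y 0) = 0 := hXY'.self_of_nhds
  have oYdX : dot4 (deriv Y 0) (X 0) = 0 := (dot4_comm _ _).trans oXYd
  have oXXd : dot4 (X 0) (deriv X 0) = 0 := by
    have h1 : HasDerivAt (fun t => dot4 (X t) (X t))
        (dot4 (deriv X 0) (X 0) + dot4 (X 0) (deriv X 0)) 0 :=
      hasDerivAt_dot4 hX0.hasDerivAt hX0.hasDerivAt
    have h2 : deriv (fun t => dot4 (X t) (X t)) 0 = deriv (fun _ : ℝ => (1:ℝ)) 0 :=
      Filter.EventuallyEq.deriv_eq hXunit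
    rw [h1.deriv, deriv_const] at h2
    have hc := dot4_comm (deriv X 0) (X 0)
    linarith [h2, hc]
  have oXdX : dot4 (deriv X 0) (X 0) = 0 := (dot4_comm _ _).trans oXXd
  have oYYd : dot4 (Y 0) (deriv Y 0) = 0 := by
    have h1 : HasDerivAt (fun t => dot4 (Y t) (Y t))
        (dot4 (deriv Y 0) (Y 0) + dot4 (Y 0) (deriv Y 0)) 0 :=
      hasDerivAt_dot4 hY0.hasDerivAt hY0.hasDerivAt
    have h2 : deriv (fun t => dot4 (Y t) (Y t)) 0 = deriv (fun _ : ℝ => (1:ℝ)) 0 :=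
      Filter.EventuallyEq.deriv_eq hYunit
    rw [h1.deriv, deriv_const] at h2
    have hc := dot4_comm (deriv Y 0) (Y 0)
    linarith [h2, hc]
  have oYdY : dot4 (deriv Y 0) (Y 0) = 0 := (dot4_comm _ _).trans oYYd
  have oXdY : dot4 (deriv X 0) (Y 0) = 0 := by
    have h1 : HasDerivAt (fun t => dot4 (X t) (Y t))
        (dot4 (deriv X 0) (Y 0) + dot4 (X 0) (deriv Y 0)) 0 :=
      hasDerivAt_dot4 hX0.hasDerivAt hY0.hasDerivAt
    have h2 : deriv (fun t => dot4 (X t) (Y t)) 0 = deriv (fun _ : ℝ => (0:ℝ)) 0 :=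
      Filter.EventuallyEq.deriv_eq hXY
    rw [h1.deriv, deriv_const] at h2
    linarith [h2, oXYd]
  have oYXd : dot4 (Y 0) (deriv X 0) = 0 := (dot4_comm _ _).trans oXdY
  have oYdXd : dot4 (deriv Y 0) (deriv X 0) = dot4 (deriv X 0) (deriv Y 0) := dot4_comm _ _
  -- linear independence of the derivatives, and the key determinant
  have li2 : LinearIndependent ℝ ![deriv X 0, deriv Y 0] := by
    have h4 := hnd.self_of_nhds
    have hinj : Function.Injective (![2, 3] : Fin 2 → Fin 4) := by decide
    have hcomp : (![X 0, Y 0, deriv X 0, deriv Y 0] ∘ (![2, 3] : Fin 2 → Fin 4))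
        = ![deriv X 0, deriv Y 0] := by
      funext i; fin_cases i <;> rfl
    have := h4.comp (![2, 3] : Fin 2 → Fin 4) hinj
    rwa [hcomp] at this
  have hΔ : dot4 (deriv X 0) (deriv X 0) * dot4 (deriv Y 0) (deriv Y 0)
      - dot4 (deriv X 0) (deriv Y 0) * dot4 (deriv X 0) (deriv Y 0) ≠ 0 := by
    have hXdne : deriv X 0 ≠ 0 := by
      have := li2.ne_zero 0
      simpa using this
    have ha : dot4 (deriv X 0) (deriv X 0) ≠ 0 := fun h0 => hXdne (dot4_self_eq_zero h0)
    intro hΔ0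
    have hw : (dot4 (deriv X 0) (deriv X 0)) • deriv Y 0
        - (dot4 (deriv X 0) (deriv Y 0)) • deriv X 0 = 0 := by
      apply dot4_self_eq_zero
      rw [dot4_expand]
      rw [dot4_comm (deriv Y 0) (deriv X 0)]
      linear_combination (dot4 (deriv X 0) (deriv X 0)) * hΔ0
    obtain ⟨hY'ne, hall⟩ := linearIndependent_fin2.1 li2
    simp only [Matrix.cons_val_one, Matrix.head_cons, Matrix.cons_val_zero] at hY'ne hall
    by_cases hc : dot4 (deriv X 0) (deriv Y 0) = 0
    · rw [hc, zero_smul, sub_zero, smul_eq_zero] at hw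
      exact hY'ne (hw.resolve_left ha)
    · apply hall (dot4 (deriv X 0) (deriv X 0) / dot4 (deriv X 0) (deriv Y 0))
      have hw' : (dot4 (deriv X 0) (deriv X 0)) • deriv Y 0
          = (dot4 (deriv X 0) (deriv Y 0)) • deriv X 0 := by
        rwa [sub_eq_zero] at hw
      rw [div_eq_mul_inv, mul_comm, ← smul_smul, hw', smul_smul, inv_mul_cancel₀ hc, one_smul]
  -- the unique solution of the limiting system
  have huniq : ∃! p : ℝ × ℝ,
      dot4 (deriv X 0) (deriv X 0) * p.1 + dot4 (deriv X 0) (deriv Y 0) * p.2 =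
        -(dot4 (deriv γ 0) (deriv X 0)) ∧
      dot4 (deriv X 0) (deriv Y 0) * p.1 + dot4 (deriv Y 0) (deriv Y 0) * p.2 =
        -(dot4 (deriv γ 0) (deriv Y 0)) := by
    set a := dot4 (deriv X 0) (deriv X 0)
    set b := dot4 (deriv Y 0) (deriv Y 0)
    set c := dot4 (deriv X 0) (deriv Y 0)
    set gx := dot4 (deriv γ 0) (deriv X 0)
    set gy := dot4 (deriv γ 0) (deriv Y 0)
    refine ⟨((c * gy - b * gx) / (a * b - c * c), (c * gx - a * gy) / (a * b - c * c)),
      ⟨?_, ?_⟩, ?_⟩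
    · rw [mul_div_assoc', mul_div_assoc', ← add_div, div_eq_iff hΔ]
      ring
    · rw [mul_div_assoc', mul_div_assoc', ← add_div, div_eq_iff hΔ]
      ring
    · rintro ⟨y1, y2⟩ ⟨h1, h2⟩
      have e1 : y1 * (a * b - c * c) = c * gy - b * gx := by linear_combination b * h1 - c * h2
      have e2 : y2 * (a * b - c * c) = c * gx - a * gy := by linear_combination a * h2 - c * h1
      rw [Prod.mk.injEq]
      constructor
      · rw [eq_div_iff hΔ]; linarith [e1]
      · rw [eq_div_iff hΔ]; linarith [e2]
  refine ⟨huniq, ?_⟩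
  -- the explicit matrix at ε = 0
  have hM0 : Mm X Y 0 = Matrix.of
      ![![1, 0, 0, 0], ![0, 1, 0, 0],
        ![0, 0, -dot4 (deriv X 0) (deriv X 0), -dot4 (deriv X 0) (deriv Y 0)],
        ![0, 0, -dot4 (deriv X 0) (deriv Y 0), -dot4 (deriv Y 0) (deriv Y 0)]] := by
    ext j k
    fin_cases j <;> fin_cases k <;>
      simp [Mm, Tv, sg, Dq_zero, oXX, oYY, oXY, oYX, oXYd, oYdX, oXXd, oXdX, oYYd, oYdY,
        oXdY, oYXd, oYdXd, Matrix.vecHead, Matrix.vecTail]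
  have hdet0 : (Mm X Y 0).det =
      dot4 (deriv X 0) (deriv X 0) * dot4 (deriv Y 0) (deriv Y 0)
        - dot4 (deriv X 0) (deriv Y 0) * dot4 (deriv X 0) (deriv Y 0) := by
    rw [hM0]
    simp [Matrix.det_succ_row_zero, Fin.sum_univ_succ]
    ring
  have hdet0ne : (Mm X Y 0).det ≠ 0 := by rw [hdet0]; exact hΔ
  -- convergence of the data
  have hTvT : ∀ k, Tendsto (fun ε => Tv X Y ε k) (𝓝 (0:ℝ)) (𝓝 (Tv X Y 0 k)) := by
    intro k
    fin_cases k
    · exact tendsto_const_nhds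
    · exact tendsto_const_nhds
    · show Tendsto (fun ε => Dq X ε) (𝓝 (0:ℝ)) (𝓝 (Dq X 0))
      rw [Dq_zero]; exact Dq_tendsto hX0
    · show Tendsto (fun ε => Dq Y ε) (𝓝 (0:ℝ)) (𝓝 (Dq Y 0))
      rw [Dq_zero]; exact Dq_tendsto hY0
  have hdotT : ∀ j k, Tendsto (fun ε => dot4 (Tv X Y ε k) (Tv X Y ε j)) (𝓝 (0:ℝ))
      (𝓝 (dot4 (Tv X Y 0 k) (Tv X Y 0 j))) := by
    intro j k
    simp only [dot4]
    exact tendsto_finset_sum _ fun i _ =>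
      ((tendsto_pi_nhds.1 (hTvT k)) i).mul ((tendsto_pi_nhds.1 (hTvT j)) i)
  have hMT : Tendsto (Mm X Y) (𝓝 (0:ℝ)) (𝓝 (Mm X Y 0)) := by
    refine tendsto_pi_nhds.2 fun j => tendsto_pi_nhds.2 fun k => ?_
    exact tendsto_const_nhds.mul (hdotT j k)
  have hdetT : Tendsto (fun ε => (Mm X Y ε).det) (𝓝 (0:ℝ)) (𝓝 ((Mm X Y 0).det)) :=
    ((Continuous.matrix_det continuous_id).tendsto (Mm X Y 0)).comp hMT
  have hadjT : Tendsto (fun ε => (Mm X Y ε).adjugate) (𝓝 (0:ℝ)) (𝓝 ((Mm X Y 0).adjugate)) :=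
    ((Continuous.matrix_adjugate continuous_id).tendsto (Mm X Y 0)).comp hMT
  have hDgT : Tendsto (Dq γ) (𝓝 (0:ℝ)) (𝓝 (Dq γ 0)) := by
    rw [Dq_zero]; exact Dq_tendsto hγ0
  have hbT : ∀ j, Tendsto (fun ε => bv γ X Y ε j) (𝓝 (0:ℝ)) (𝓝 (bv γ X Y 0 j)) := by
    intro j
    simp only [bv, dot4]
    exact tendsto_finset_sum _ fun i _ =>
      ((tendsto_pi_nhds.1 hDgT) i).mul ((tendsto_pi_nhds.1 (hTvT j)) i)
  have hsolvT : ∀ i, Tendsto (fun ε => solv γ X Y ε i) (𝓝 (0:ℝ)) (𝓝 (solv γ X Y 0 i)) := by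
    intro i
    show Tendsto (fun ε => (Mm X Y ε).det⁻¹ * ((Mm X Y ε).adjugate.mulVec (bv γ X Y ε) i))
      (𝓝 (0:ℝ)) (𝓝 ((Mm X Y 0).det⁻¹ * ((Mm X Y 0).adjugate.mulVec (bv γ X Y 0) i)))
    refine (hdetT.inv₀ hdet0ne).mul ?_
    simp only [Matrix.mulVec, dotProduct]
    exact tendsto_finset_sum _ fun k _ =>
      ((tendsto_pi_nhds.1 ((tendsto_pi_nhds.1 hadjT) i)) k).mul (hbT k)
  have hdetne : ∀ᶠ ε in 𝓝[≠] (0:ℝ), (Mm X Y ε).det ≠ 0 :=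
    (hdetT.eventually_ne hdet0ne).filter_mono nhdsWithin_le_nhds
  -- the limiting solution satisfies the system
  have hmv0 : (Mm X Y 0).mulVec (solv γ X Y 0) = bv γ X Y 0 :=
    (mulVec_eq_iff _ hdet0ne _ _).2 rfl
  have hrow2 := congrFun hmv0 2
  have hrow3 := congrFun hmv0 3
  rw [hM0] at hrow2 hrow3
  simp [Matrix.mulVec, dotProduct, Fin.sum_univ_four, bv, Tv, Dq_zero] at hrow2 hrow3
  have hsys2 : dot4 (deriv X 0) (deriv X 0) * solv γ X Y 0 2
      + dot4 (deriv X 0) (deriv Y 0) * solv γ X Y 0 3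
      = -(dot4 (deriv γ 0) (deriv X 0)) := by linarith [hrow2]
  have hsys3 : dot4 (deriv X 0) (deriv Y 0) * solv γ X Y 0 2
      + dot4 (deriv Y 0) (deriv Y 0) * solv γ X Y 0 3
      = -(dot4 (deriv γ 0) (deriv Y 0)) := by linarith [hrow3]
  refine ⟨scf γ X Y, ?_, ?_⟩
  · -- characterization of the critical point for small ε ≠ 0
    filter_upwards [hdetne, self_mem_nhdsWithin] with ε hdε (hε : ε ≠ 0)
    intro q
    rw [(hasFDerivAt_quad (γ 0) (γ ε) (X 0) (Y 0) (X ε) (Y ε) q).fderiv, comb_eq_zero_iff]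
    set V : E4 := γ 0 + q.1.1 • X 0 + q.1.2 • Y 0 - γ ε - q.2.1 • X ε - q.2.2 • Y ε with hVdef
    set uq : Fin 4 → ℝ := ![(q.1.1 - q.2.1)/ε, (q.1.2 - q.2.2)/ε, q.2.1, q.2.2] with huq
    have hDqX : Dq X ε = ε⁻¹ • (X ε - X 0) := by simp [Dq, hε]
    have hDqY : Dq Y ε = ε⁻¹ • (Y ε - Y 0) := by simp [Dq, hε]
    have key : ∀ j : Fin 4, (Mm X Y ε).mulVec uq j - bv γ X Y ε j
        = ε⁻¹ * dot4 V (Tv X Y ε j) := by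
      intro j
      fin_cases j <;>
      · simp only [huq, hVdef, Mm, bv, Tv, sg, Dq, if_neg hε, Matrix.mulVec,
          dotProduct, Fin.sum_univ_four, Matrix.of_apply, dot4,
          Matrix.cons_val_zero, Matrix.cons_val_one, Matrix.head_cons,
          Matrix.cons_val_two, Matrix.cons_val_three, Matrix.tail_cons,
          Pi.add_apply, Pi.sub_apply, Pi.smul_apply, smul_eq_mul]
        field_simp
        ring
    constructor
    · rintro ⟨h0, h1, h2, h3⟩
      have hz : ∀ j, dot4 V (Tv X Y ε j) = 0 := by
        intro j
        fin_cases j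
        · exact h0
        · exact h1
        · show dot4 V (Dq X ε) = 0
          rw [hDqX, dot4_smul_right, dot4_sub_right, h2, h0]; ring
        · show dot4 V (Dq Y ε) = 0
          rw [hDqY, dot4_smul_right, dot4_sub_right, h3, h1]; ring
      have hmv : (Mm X Y ε).mulVec uq = bv γ X Y ε := by
        funext j
        have hk := key j
        rw [hz j, mul_zero] at hk
        linarith [hk]
      have husolv : uq = solv γ X Y ε := (mulVec_eq_iff _ hdε _ _).1 hmv
      have e0 : (q.1.1 - q.2.1)/ε = solv γ X Y ε 0 := congrFun husolv 0
      have e1 : (q.1.2 - q.2.2)/ε = solv γ X Y ε 1 := congrFun husolv 1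
      have e2 : q.2.1 = solv γ X Y ε 2 := congrFun husolv 2
      have e3 : q.2.2 = solv γ X Y ε 3 := congrFun husolv 3
      have hq11 : q.1.1 = solv γ X Y ε 2 + ε * solv γ X Y ε 0 := by
        rw [← e2, ← e0]; field_simp; ring
      have hq12 : q.1.2 = solv γ X Y ε 3 + ε * solv γ X Y ε 1 := by
        rw [← e3, ← e1]; field_simp; ring
      show q = scf γ X Y ε
      have hqeq : q = ((q.1.1, q.1.2), (q.2.1, q.2.2)) := rfl
      rw [hqeq, hq11, hq12, e2, e3]; rfl
    · intro hq
      have hq11 : q.1.1 = solv γ X Y ε 2 + ε * solv γ X Y ε 0 := by rw [hq]; rfl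
      have hq12 : q.1.2 = solv γ X Y ε 3 + ε * solv γ X Y ε 1 := by rw [hq]; rfl
      have hq21 : q.2.1 = solv γ X Y ε 2 := by rw [hq]; rfl
      have hq22 : q.2.2 = solv γ X Y ε 3 := by rw [hq]; rfl
      have husolv : uq = solv γ X Y ε := by
        funext k
        fin_cases k
        · show (q.1.1 - q.2.1)/ε = solv γ X Y ε 0
          rw [hq11, hq21]; field_simp; ring
        · show (q.1.2 - q.2.2)/ε = solv γ X Y ε 1
          rw [hq12, hq22]; field_simp; ring
        · exact hq21
        · exact hq22
      have hmv : (Mm X Y ε).mulVec uq = bv γ X Y ε := (mulVec_eq_iff _ hdε _ _).2 husolv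
      have hz : ∀ j, dot4 V (Tv X Y ε j) = 0 := by
        intro j
        have hk := key j
        rw [congrFun hmv j, sub_self] at hk
        exact ((mul_eq_zero.1 hk.symm).resolve_left (inv_ne_zero hε))
      have h0 : dot4 V (X 0) = 0 := hz 0
      have h1 : dot4 V (Y 0) = 0 := hz 1
      refine ⟨h0, h1, ?_, ?_⟩
      · have h2 : dot4 V (Dq X ε) = 0 := hz 2
        rw [hDqX, dot4_smul_right, dot4_sub_right] at h2
        have hsub := (mul_eq_zero.1 h2).resolve_left (inv_ne_zero hε)
        linarith [hsub, h0]
      · have h3 : dot4 V (Dq Y ε) = 0 := hz 3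
        rw [hDqY, dot4_smul_right, dot4_sub_right] at h3
        have hsub := (mul_eq_zero.1 h3).resolve_left (inv_ne_zero hε)
        linarith [hsub, h1]
  · -- convergence to the striction point
    intro s₀ r₀ hsys
    obtain ⟨p₀, hp₀, hpu⟩ := huniq
    have h1 : (s₀, r₀) = p₀ := hpu _ hsys
    have h2 : (solv γ X Y 0 2, solv γ X Y 0 3) = p₀ := hpu _ ⟨hsys2, hsys3⟩
    have heq := h1.trans h2.symm
    have hs : s₀ = solv γ X Y 0 2 := congrArg Prod.fst heq
    have hr : r₀ = solv γ X Y 0 3 := congrArg Prod.snd heq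
    subst hs hr
    have h2' : ∀ i, Tendsto (fun ε => solv γ X Y ε i) (𝓝[≠] (0:ℝ)) (𝓝 (solv γ X Y 0 i)) :=
      fun i => (hsolvT i).mono_left nhdsWithin_le_nhds
    have hid : Tendsto (fun ε : ℝ => ε) (𝓝[≠] (0:ℝ)) (𝓝 0) :=
      tendsto_id.mono_left nhdsWithin_le_nhds
    have c1 : Tendsto (fun ε => solv γ X Y ε 2 + ε * solv γ X Y ε 0) (𝓝[≠] (0:ℝ))
        (𝓝 (solv γ X Y 0 2)) := by
      have := (h2' 2).add (hid.mul (h2' 0))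
      simpa using this
    have c2 : Tendsto (fun ε => solv γ X Y ε 3 + ε * solv γ X Y ε 1) (𝓝[≠] (0:ℝ))
        (𝓝 (solv γ X Y 0 3)) := by
      have := (h2' 3).add (hid.mul (h2' 1))
      simpa using this
    exact (c1.prodMk_nhds c2).prodMk_nhds ((h2' 2).prodMk_nhds (h2' 3))
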